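/- arXiv:1612.03292 — 6 statements merged into one kernel-verified Lean document; each statement's English description precedes it below -/
import Mathlib

section
/- The generating function identity: for all real u with |u| < 1 and u ≠ 0, u / log(1+u) = 1 + ∑_{n=1}^∞ G_n u^n, where G_n = (1/n!) ∫_0^1 x(x-1)(x-2)⋯(x-n+1) dx. -/
/-!
Since `G n = ∫₀¹ (x choose n) dx`, integrate the binomial series `(1 + u) ^ x = ∑ (x choose n) uⁿ`
over `x ∈ [0, 1]` term by term: for such `x`, `|x choose n| ≤ 1`, so the series is dominated by
`∑ |u|ⁿ`. The left side becomes `∫₀¹ (1 + u) ^ x dx = u / log (1 + u)`.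
-/

open MeasureTheory Real

noncomputable def G (n : ℕ) : ℝ :=
  (n.factorial : ℝ)⁻¹ * ∫ x in (0:ℝ)..1, ∏ k ∈ Finset.range n, (x - k)

open Finset Polynomial in
theorem Ring.choose_eq_prod_range_div {K : Type*} [Field K] [CharZero K] (r : K) (n : ℕ) :
    Ring.choose r n = (∏ k ∈ range n, (r - k)) / n.factorial := by
  rw [← descPochhammer_eval_eq_prod_range, eq_div_iff (Nat.cast_ne_zero.mpr n.factorial_ne_zero),
    mul_comm, ← nsmul_eq_mul, ← descPochhammer_eq_factorial_smul_choose,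
    ← descPochhammer_map (algebraMap ℤ K), eval_map_algebraMap, aeval_eq_smeval]

namespace Real

theorem hasSum_choose_mul_pow (a : ℝ) {y : ℝ} (hy : |y| < 1) :
    HasSum (fun n ↦ Ring.choose a n * y ^ n) ((1 + y) ^ a) := by
  have := (one_add_rpow_hasFPowerSeriesOnBall_zero (a := a)).hasSum (y := y)
    (by simpa [edist_dist, ← ENNReal.ofReal_one] using hy)
  simpa [binomialSeries, FormalMultilinearSeries.ofScalars, mul_comm] using this

theorem abs_prod_range_sub_le_factorial {x : ℝ} (hx : x ∈ Set.Icc 0 1) (n : ℕ) :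
    |∏ k ∈ Finset.range n, (x - k)| ≤ n.factorial := by
  rw [Finset.abs_prod, ← Finset.prod_range_add_one_eq_factorial, Nat.cast_prod]
  refine Finset.prod_le_prod (fun _ _ ↦ abs_nonneg _) fun k _ ↦ abs_le.2 ⟨?_, ?_⟩ <;>
    push_cast <;> linarith [hx.1, hx.2, (k.cast_nonneg : (0 : ℝ) ≤ k)]

theorem abs_choose_le_one {x : ℝ} (hx : x ∈ Set.Icc 0 1) (n : ℕ) : |Ring.choose x n| ≤ 1 := by
  rw [Ring.choose_eq_prod_range_div, abs_div, Nat.abs_cast, div_le_one (by positivity)]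
  exact abs_prod_range_sub_le_factorial hx n

theorem continuous_choose (n : ℕ) : Continuous fun x : ℝ ↦ Ring.choose x n := by
  simp_rw [Ring.choose_eq_prod_range_div]
  fun_prop

theorem integral_const_rpow {c : ℝ} (hc₀ : 0 < c) (hc₁ : c ≠ 1) (a b : ℝ) :
    ∫ x in a..b, c ^ x = (c ^ b - c ^ a) / log c := by
  have hlog : log c ≠ 0 := log_ne_zero_of_pos_of_ne_one hc₀ hc₁
  have hderiv (x : ℝ) : HasDerivAt (fun x ↦ c ^ x / log c) (c ^ x) x := by
    simpa [hlog] using ((hasStrictDerivAt_const_rpow hc₀ x).hasDerivAt.div_const (log c))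
  rw [intervalIntegral.integral_eq_sub_of_hasDerivAt (fun x _ ↦ hderiv x)
    ((continuous_const_rpow hc₀.ne').intervalIntegrable a b), sub_div]

end Real

theorem G_eq_integral_choose (n : ℕ) : G n = ∫ x in (0 : ℝ)..1, Ring.choose x n := by
  simp_rw [G, Ring.choose_eq_prod_range_div, intervalIntegral.integral_div, div_eq_inv_mul]

theorem hasSum_G_mul_pow {u : ℝ} (h1 : |u| < 1) (h2 : u ≠ 0) :
    HasSum (fun n ↦ G n * u ^ n) (u / log (1 + u)) := by
  have hu : 0 < 1 + u := by linarith [neg_abs_le u]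
  have hsum := intervalIntegral.hasSum_integral_of_dominated_convergence (μ := volume)
    (a := 0) (b := 1) (F := fun n x ↦ Ring.choose x n * u ^ n) (f := fun x ↦ (1 + u) ^ x)
    (fun n _ ↦ |u| ^ n) ?meas ?bound ?summable intervalIntegrable_const ?lim
  case meas => exact fun n ↦ ((continuous_choose n).mul_const _).aestronglyMeasurable
  case bound =>
    refine fun n ↦ .of_forall fun x hx ↦ ?_
    rw [Set.uIoc_of_le zero_le_one] at hx
    rw [norm_mul, norm_pow, Real.norm_eq_abs, Real.norm_eq_abs]
    exact mul_le_of_le_one_left (by positivity) (abs_choose_le_one (Set.Ioc_subset_Icc_self hx) n)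
  case summable => exact .of_forall fun _ _ ↦ summable_geometric_of_lt_one (abs_nonneg u) h1
  case lim => exact .of_forall fun _ _ ↦ hasSum_choose_mul_pow _ h1
  rw [integral_const_rpow hu (by simpa using h2), rpow_one, rpow_zero, add_sub_cancel_left] at hsum
  simpa only [G_eq_integral_choose, intervalIntegral.integral_mul_const] using hsum

theorem gregory_generating_function (u : ℝ) (h1 : |u| < 1) (h2 : u ≠ 0) :
    u / Real.log (1 + u) = 1 + ∑' n : ℕ, G (n + 1) * u ^ (n + 1) := by
  have hsum := hasSum_G_mul_pow h1 h2
  have hG0 : G 0 = 1 := by simp [G]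
  rw [← hsum.tsum_eq, hsum.summable.tsum_eq_zero_add, hG0, pow_zero, mul_one]
end

section
/- For every n ≥ 1, the sign of G_n is (-1)^{n-1}; that is, G_n = (-1)^{n-1} |G_n| and G_n ≠ 0. -/
open MeasureTheory

/-! On `(0, 1)` the factor `x` is positive and each of the `n` factors `x - k`, `k ≥ 1`, is
negative, so `(-1)^n x(x-1)⋯(x-n)` is positive there; integrating over `[0, 1]` and dividing by
`(n+1)!` shows that `(-1)^n G_{n+1} > 0`. -/

lemma neg_one_pow_mul_prod_range_succ_sub_pos {R : Type*} [CommRing R] [LinearOrder R]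
    [IsStrictOrderedRing R] {x : R} (hx₀ : 0 < x) (hx₁ : x < 1) (n : ℕ) :
    0 < (-1 : R) ^ n * ∏ k ∈ Finset.range (n + 1), (x - k) := by
  induction n with
  | zero => simpa using hx₀
  | succ n ih =>
    have hfactor : 0 < (n + 1 : R) - x := by linarith [(Nat.cast_nonneg n : (0 : R) ≤ n)]
    calc (0 : R) < ((-1) ^ n * ∏ k ∈ Finset.range (n + 1), (x - k)) * ((n + 1 : R) - x) :=
          mul_pos ih hfactor
      _ = (-1) ^ (n + 1) * ∏ k ∈ Finset.range (n + 1 + 1), (x - k) := by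
          rw [Finset.prod_range_succ _ (n + 1), pow_succ]; push_cast; ring

lemma neg_one_pow_mul_G_succ_pos (n : ℕ) : 0 < (-1 : ℝ) ^ n * G (n + 1) := by
  have hint : 0 < ∫ x in (0 : ℝ)..1, (-1 : ℝ) ^ n * ∏ k ∈ Finset.range (n + 1), (x - k) :=
    intervalIntegral.intervalIntegral_pos_of_pos_on
      ((by fun_prop : Continuous _).intervalIntegrable _ _)
      (fun _ hx ↦ neg_one_pow_mul_prod_range_succ_sub_pos hx.1 hx.2 n) zero_lt_one
  rw [intervalIntegral.integral_const_mul] at hint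
  rw [G, mul_left_comm]
  positivity

lemma eq_neg_one_pow_mul_abs_of_pos {R : Type*} [Ring R] [LinearOrder R] [IsStrictOrderedRing R]
    {a : R} {m : ℕ} (h : 0 < (-1) ^ m * a) :
    a = (-1) ^ m * |a| := by
  have habs : |a| = (-1) ^ m * a := by
    rw [← abs_of_pos h, abs_mul, abs_neg_one_pow, one_mul]
  rw [habs, ← mul_assoc, ← pow_add, Even.neg_one_pow ⟨m, rfl⟩, one_mul]

theorem gregory_sign (n : ℕ) (hn : 1 ≤ n) :
    G n = (-1 : ℝ) ^ (n - 1) * |G n| ∧ G n ≠ 0 := by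
  obtain ⟨m, rfl⟩ := Nat.exists_eq_add_of_le' hn
  have hpos := neg_one_pow_mul_G_succ_pos m
  exact ⟨eq_neg_one_pow_mul_abs_of_pos hpos, right_ne_zero_of_mul hpos.ne'⟩
end

section
/- The sequence |G_n| is strictly decreasing: for all n ≥ 1, |G_{n+1}| < |G_n|. -/
open MeasureTheory

/-!
On `[0, 1]` the integrand `x (x - 1) ⋯ (x - n)` of `(n + 1)! G_{n+1}` equals `(-1)^n` times
`K_n(x) = x (1 - x) ⋯ (n - x)`, which is positive on `(0, 1)`; hence
`|G_{n+1}| = ∫₀¹ K_n / (n + 1)!`. Since `K_{n+1}(x) = K_n(x) (n + 1 - x)` and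
`n + 1 - x < n + 2`, we get `∫ K_{n+1} < (n + 2) ∫ K_n`, which is `|G_{n+2}| < |G_{n+1}|`.
-/

open Finset

noncomputable def gregoryKernel (n : ℕ) (x : ℝ) : ℝ :=
  x * ∏ k ∈ range n, ((k + 1 : ℝ) - x)

lemma prod_range_succ_sub_eq_neg_one_pow_mul (n : ℕ) (x : ℝ) :
    ∏ k ∈ range (n + 1), (x - k) = (-1) ^ n * gregoryKernel n x := by
  have hneg : ∏ k ∈ range n, (x - (k + 1 : ℕ)) = (-1) ^ n * ∏ k ∈ range n, ((k + 1 : ℝ) - x) := by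
    have h := prod_neg (s := range n) fun k : ℕ => (k + 1 : ℝ) - x
    rw [card_range] at h
    rw [← h]
    push_cast
    simp only [neg_sub]
  rw [prod_range_succ', hneg, gregoryKernel]
  push_cast
  ring

lemma gregoryKernel_succ (n : ℕ) (x : ℝ) :
    gregoryKernel (n + 1) x = gregoryKernel n x * (n + 1 - x) := by
  simp only [gregoryKernel, prod_range_succ]
  ring

lemma continuous_gregoryKernel (n : ℕ) : Continuous (gregoryKernel n) := by
  unfold gregoryKernel
  fun_prop

lemma gregoryKernel_pos {n : ℕ} {x : ℝ} (hx : x ∈ Set.Ioo 0 1) : 0 < gregoryKernel n x :=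
  mul_pos hx.1 (prod_pos fun k _ => by linarith [hx.2, (k.cast_nonneg : (0:ℝ) ≤ k)])

lemma integral_gregoryKernel_pos (n : ℕ) : 0 < ∫ x in (0:ℝ)..1, gregoryKernel n x :=
  intervalIntegral.intervalIntegral_pos_of_pos_on
    ((continuous_gregoryKernel n).intervalIntegrable 0 1) (fun _ => gregoryKernel_pos) one_pos

lemma abs_G_succ (n : ℕ) :
    |G (n + 1)| = ((n + 1).factorial : ℝ)⁻¹ * ∫ x in (0:ℝ)..1, gregoryKernel n x := by
  simp only [G, prod_range_succ_sub_eq_neg_one_pow_mul, intervalIntegral.integral_const_mul,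
    abs_mul, abs_pow, abs_neg, abs_one, one_pow, one_mul, abs_inv, Nat.abs_cast,
    abs_of_pos (integral_gregoryKernel_pos n)]

lemma integral_gregoryKernel_succ_lt (n : ℕ) :
    ∫ x in (0:ℝ)..1, gregoryKernel (n + 1) x < (n + 2) * ∫ x in (0:ℝ)..1, gregoryKernel n x := by
  have hK := continuous_gregoryKernel n
  have hgap : 0 < ∫ x in (0:ℝ)..1, gregoryKernel n x * (1 + x) :=
    intervalIntegral.intervalIntegral_pos_of_pos_on
      ((hK.mul (continuous_const.add continuous_id)).intervalIntegrable 0 1)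
      (fun x hx => mul_pos (gregoryKernel_pos hx) (by linarith [hx.1])) one_pos
  have hdiff : (n + 2) * (∫ x in (0:ℝ)..1, gregoryKernel n x)
      - ∫ x in (0:ℝ)..1, gregoryKernel (n + 1) x = ∫ x in (0:ℝ)..1, gregoryKernel n x * (1 + x) := by
    rw [← intervalIntegral.integral_const_mul (n + 2 : ℝ) (gregoryKernel n),
      ← intervalIntegral.integral_sub
      ((hK.const_mul _).intervalIntegrable 0 1) ((continuous_gregoryKernel _).intervalIntegrable 0 1)]
    congr 1 with x
    rw [gregoryKernel_succ]
    ring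
  linarith

theorem gregory_abs_strict_anti (n : ℕ) (hn : 1 ≤ n) :
    |G (n + 1)| < |G n| := by
  obtain ⟨m, rfl⟩ := Nat.exists_eq_add_of_le' hn
  rw [abs_G_succ, abs_G_succ]
  calc ((m + 1 + 1).factorial : ℝ)⁻¹ * ∫ x in (0:ℝ)..1, gregoryKernel (m + 1) x
      < ((m + 1 + 1).factorial : ℝ)⁻¹ * ((m + 2) * ∫ x in (0:ℝ)..1, gregoryKernel m x) := by
        gcongr
        exact integral_gregoryKernel_succ_lt m
    _ = ((m + 1).factorial : ℝ)⁻¹ * ∫ x in (0:ℝ)..1, gregoryKernel m x := by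
        rw [Nat.factorial_succ (m + 1)]
        push_cast
        field_simp
        ring
end

section
/- Schröder's integral representation: for every n ≥ 1, G_n = (-1)^{n+1} ∫_0^∞ du / ((log² u + π²)(u+1)^n). -/
/-!
After the substitution `u = t / (1 - t)`, the elementary integral
`∫₀¹ e^{ax} sin (πx) dx = π (e^a + 1) / (a² + π²)` with `a = log u` writes the new integrand
(Jacobian included) as `π⁻¹ ∫₀¹ sin (πx) t^x (1 - t)^(n-1-x) dx`. This kernel is nonnegative, so the order of
integration may be exchanged; the `t`-integral is then the Beta integral `Γ(x+1) Γ(n-x) / n!`,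
and the reflection formula turns `sin (πx) Γ(x+1) Γ(n-x)` into `π (-1)^(n+1) x (x-1) ⋯ (x-n+1)`.
-/

open MeasureTheory Real

open Set

theorem integral_exp_mul_mul_sin_pi_mul (a : ℝ) :
    ∫ x in (0:ℝ)..1, exp (a * x) * sin (π * x) = π * (exp a + 1) / (a ^ 2 + π ^ 2) := by
  have hderiv (x : ℝ) : HasDerivAt
      (fun y ↦ exp (a * y) * (a * sin (π * y) - π * cos (π * y)) / (a ^ 2 + π ^ 2))
      (exp (a * x) * sin (π * x)) x := by
    have hexp := ((hasDerivAt_id' x).const_mul a).exp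
    have hsin := ((hasDerivAt_id' x).const_mul π).sin
    have hcos := ((hasDerivAt_id' x).const_mul π).cos
    refine ((hexp.mul ((hsin.const_mul a).sub (hcos.const_mul π))).div_const _).congr_deriv ?_
    rw [Pi.sub_apply]
    field_simp
    ring
  rw [intervalIntegral.integral_eq_sub_of_hasDerivAt (fun x _ ↦ hderiv x)
    (Continuous.intervalIntegrable (by fun_prop) _ _)]
  simp only [mul_one, mul_zero, sin_pi, cos_pi, sin_zero, cos_zero, exp_zero]
  ring

theorem ofReal_cpow_mul_one_sub_cpow {a b t : ℝ} (ht : t ∈ Icc (0:ℝ) 1) :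
    (t : ℂ) ^ ((a : ℂ) - 1) * (1 - (t : ℂ)) ^ ((b : ℂ) - 1)
      = ((t ^ (a - 1) * (1 - t) ^ (b - 1) : ℝ) : ℂ) := by
  rw [Complex.ofReal_mul, Complex.ofReal_cpow ht.1, Complex.ofReal_cpow (sub_nonneg.2 ht.2)]
  push_cast
  rfl

theorem intervalIntegrable_rpow_mul_one_sub_rpow {a b : ℝ} (ha : 0 < a) (hb : 0 < b) :
    IntervalIntegrable (fun t ↦ t ^ (a - 1) * (1 - t) ^ (b - 1)) volume 0 1 := by
  refine (Complex.betaIntegral_convergent (u := a) (v := b) (by simpa) (by simpa)).norm.congr_uIoo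
    fun t ht ↦ ?_
  rw [uIoo_of_le zero_le_one] at ht
  have ht' : t ∈ Icc (0:ℝ) 1 := Ioo_subset_Icc_self ht
  simp only
  rw [ofReal_cpow_mul_one_sub_cpow ht', Complex.norm_real, norm_of_nonneg]
  exact mul_nonneg (rpow_nonneg ht'.1 _) (rpow_nonneg (sub_nonneg.2 ht'.2) _)

theorem integral_rpow_mul_one_sub_rpow {a b : ℝ} (ha : 0 < a) (hb : 0 < b) :
    ∫ t in (0:ℝ)..1, t ^ (a - 1) * (1 - t) ^ (b - 1) = Gamma a * Gamma b / Gamma (a + b) := by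
  have key := Complex.betaIntegral_eq_Gamma_mul_div a b (by simpa) (by simpa)
  rw [Complex.betaIntegral, intervalIntegral.integral_congr fun t ht ↦
    ofReal_cpow_mul_one_sub_cpow (by rwa [uIcc_of_le zero_le_one] at ht),
    intervalIntegral.integral_ofReal, ← Complex.ofReal_add, Complex.Gamma_ofReal,
    Complex.Gamma_ofReal, Complex.Gamma_ofReal] at key
  exact_mod_cast key

theorem sin_mul_Gamma_add_one_mul_Gamma_natCast_sub (n : ℕ) {x : ℝ} (hx : sin (π * x) ≠ 0) :
    sin (π * x) * (Gamma (x + 1) * Gamma (n - x))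
      = π * ((-1) ^ (n + 1) * ∏ k ∈ Finset.range n, (x - k)) := by
  induction n with
  | zero =>
    have hx0 : x ≠ 0 := by rintro rfl; simp at hx
    have hreflect := Gamma_mul_Gamma_one_sub x
    rw [sub_eq_neg_add, Gamma_add_one (neg_ne_zero.2 hx0)] at hreflect
    have hcancel : Gamma x * (-x * Gamma (-x)) * sin (π * x) = π := by
      rw [hreflect, div_mul_cancel₀ _ hx]
    rw [Nat.cast_zero, zero_sub, Gamma_add_one hx0]
    simp only [zero_add, pow_one, Finset.range_zero, Finset.prod_empty]
    linear_combination -hcancel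
  | succ m ih =>
    have hmx : (m : ℝ) - x ≠ 0 := by
      intro h
      rw [← sub_eq_zero.1 h, mul_comm, sin_nat_mul_pi] at hx
      exact hx rfl
    rw [Nat.cast_succ, show (m : ℝ) + 1 - x = m - x + 1 by ring, Gamma_add_one hmx,
      Finset.prod_range_succ]
    linear_combination ((m : ℝ) - x) * ih

theorem integral_Ioi_eq_integral_Ioo_div_one_sub {E : Type*} [NormedAddCommGroup E]
    [NormedSpace ℝ E] (g : ℝ → E) :
    ∫ u in Ioi (0:ℝ), g u = ∫ t in Ioo (0:ℝ) 1, ((1 - t) ^ 2)⁻¹ • g (t / (1 - t)) := by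
  have himage : (fun t : ℝ ↦ t / (1 - t)) '' Ioo 0 1 = Ioi 0 := by
    ext u
    simp only [mem_image, mem_Ioo, mem_Ioi]
    constructor
    · rintro ⟨t, ⟨ht0, ht1⟩, rfl⟩
      exact div_pos ht0 (by linarith)
    · intro hu
      refine ⟨u / (1 + u), ⟨by positivity, (div_lt_one (by linarith)).2 (by linarith)⟩, ?_⟩
      field_simp
      ring
  have hderiv (t : ℝ) (ht : t ∈ Ioo (0:ℝ) 1) :
      HasDerivWithinAt (fun t : ℝ ↦ t / (1 - t)) ((1 - t) ^ 2)⁻¹ (Ioo 0 1) t := by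
    have h1t : 1 - t ≠ 0 := by linarith [ht.2]
    refine (((hasDerivAt_id' t).div ((hasDerivAt_id' t).const_sub 1) h1t).congr_deriv ?_)
      |>.hasDerivWithinAt
    field_simp
    ring
  have hinj : InjOn (fun t : ℝ ↦ t / (1 - t)) (Ioo 0 1) := by
    intro a ha b hb hab
    have h1a : 1 - a ≠ 0 := by linarith [ha.2]
    have h1b : 1 - b ≠ 0 := by linarith [hb.2]
    field_simp at hab
    linarith
  rw [← himage, integral_image_eq_integral_abs_deriv_smul measurableSet_Ioo hderiv hinj]
  refine setIntegral_congr_fun measurableSet_Ioo fun t _ ↦ ?_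
  rw [abs_of_nonneg (by positivity)]

noncomputable def schroderKernel (n : ℕ) (t x : ℝ) : ℝ :=
  sin (π * x) * t ^ x * (1 - t) ^ ((n : ℝ) - 1 - x)

theorem schroderKernel_nonneg (n : ℕ) {t x : ℝ} (ht : t ∈ Icc (0:ℝ) 1) (hx : x ∈ Icc (0:ℝ) 1) :
    0 ≤ schroderKernel n t x := by
  have hsin : 0 ≤ sin (π * x) :=
    sin_nonneg_of_nonneg_of_le_pi (by nlinarith [pi_pos, hx.1]) (by nlinarith [pi_pos, hx.2])
  exact mul_nonneg (mul_nonneg hsin (rpow_nonneg ht.1 _)) (rpow_nonneg (sub_nonneg.2 ht.2) _)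

theorem continuousOn_uncurry_schroderKernel (n : ℕ) :
    ContinuousOn (Function.uncurry (schroderKernel n)) (Ioo (0:ℝ) 1 ×ˢ Ioo (0:ℝ) 1) := by
  rintro ⟨t, x⟩ ⟨ht, -⟩
  have h1t : 1 - t ≠ 0 := by linarith [ht.2]
  refine ContinuousAt.continuousWithinAt ?_
  have hpow₁ : ContinuousAt (fun p : ℝ × ℝ ↦ p.1 ^ p.2) (t, x) :=
    continuousAt_fst.rpow continuousAt_snd (Or.inl ht.1.ne')
  have hpow₂ : ContinuousAt (fun p : ℝ × ℝ ↦ (1 - p.1) ^ ((n : ℝ) - 1 - p.2)) (t, x) :=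
    (continuousAt_const.sub continuousAt_fst).rpow (continuousAt_const.sub continuousAt_snd)
      (Or.inl h1t)
  exact ((continuous_sin.comp (by fun_prop)).continuousAt.mul hpow₁).mul hpow₂

theorem schroderKernel_eq_sin_mul_rpow_mul_rpow (n : ℕ) (t x : ℝ) : schroderKernel n t x
    = sin (π * x) * (t ^ (x + 1 - 1) * (1 - t) ^ ((n : ℝ) - x - 1)) := by
  rw [schroderKernel, add_sub_cancel_right, sub_right_comm, mul_assoc]

theorem integral_schroderKernel_dx (n : ℕ) {t : ℝ} (ht : t ∈ Ioo (0:ℝ) 1) :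
    ∫ x in Ioo (0:ℝ) 1, schroderKernel n t x
      = π * (((1 - t) ^ 2)⁻¹ *
          (1 / ((log (t / (1 - t)) ^ 2 + π ^ 2) * (t / (1 - t) + 1) ^ n))) := by
  have h1t : 0 < 1 - t := by linarith [ht.2]
  set u := t / (1 - t) with hu
  have hu_pos : 0 < u := div_pos ht.1 h1t
  have hkernel (x : ℝ) :
      schroderKernel n t x = (1 - t) ^ ((n : ℝ) - 1) * (exp (log u * x) * sin (π * x)) := by
    rw [schroderKernel, ← rpow_def_of_pos hu_pos, hu, div_rpow ht.1.le h1t.le, rpow_sub h1t]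
    field_simp
  have hu1 : u + 1 = (1 - t)⁻¹ := by rw [hu]; field_simp; ring
  rw [← integral_Ioc_eq_integral_Ioo, ← intervalIntegral.integral_of_le zero_le_one,
    intervalIntegral.integral_congr fun x _ ↦ hkernel x, intervalIntegral.integral_const_mul,
    integral_exp_mul_mul_sin_pi_mul, exp_log hu_pos, hu1, rpow_sub_one h1t.ne', rpow_natCast,
    inv_pow]
  field_simp

theorem integral_schroderKernel_dt {n : ℕ} (hn : 1 ≤ n) {x : ℝ} (hx : x ∈ Ioo (0:ℝ) 1) :
    ∫ t in Ioo (0:ℝ) 1, schroderKernel n t x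
      = π * (-1) ^ (n + 1) / n.factorial * ∏ k ∈ Finset.range n, (x - k) := by
  have hsin : 0 < sin (π * x) :=
    sin_pos_of_pos_of_lt_pi (by nlinarith [pi_pos, hx.1]) (by nlinarith [pi_pos, hx.2])
  have hnx : 0 < (n : ℝ) - x := sub_pos_of_lt (hx.2.trans_le (by exact_mod_cast hn))
  rw [← integral_Ioc_eq_integral_Ioo, ← intervalIntegral.integral_of_le zero_le_one,
    intervalIntegral.integral_congr fun t _ ↦ schroderKernel_eq_sin_mul_rpow_mul_rpow n t x,
    intervalIntegral.integral_const_mul, integral_rpow_mul_one_sub_rpow (by linarith [hx.1]) hnx,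
    show x + 1 + ((n : ℝ) - x) = n + 1 by ring, Gamma_nat_eq_factorial, ← mul_div_assoc,
    sin_mul_Gamma_add_one_mul_Gamma_natCast_sub n hsin.ne']
  ring

theorem integrable_schroderKernel {n : ℕ} (hn : 1 ≤ n) :
    Integrable (Function.uncurry (schroderKernel n))
      ((volume.restrict (Ioo (0:ℝ) 1)).prod (volume.restrict (Ioo (0:ℝ) 1))) := by
  have hmeas : AEStronglyMeasurable (Function.uncurry (schroderKernel n))
      ((volume.restrict (Ioo (0:ℝ) 1)).prod (volume.restrict (Ioo (0:ℝ) 1))) := by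
    rw [Measure.prod_restrict]
    exact (continuousOn_uncurry_schroderKernel n).aestronglyMeasurable
      (measurableSet_Ioo.prod measurableSet_Ioo)
  refine (integrable_prod_iff' hmeas).2
    ⟨ae_restrict_of_forall_mem measurableSet_Ioo fun x hx ↦ ?_, ?_⟩
  · have hnx : 0 < (n : ℝ) - x := sub_pos_of_lt (hx.2.trans_le (by exact_mod_cast hn))
    have hbeta := (intervalIntegrable_rpow_mul_one_sub_rpow (a := x + 1) (by linarith [hx.1])
      hnx).const_mul (sin (π * x))
    rw [intervalIntegrable_iff_integrableOn_Ioo_of_le zero_le_one] at hbeta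
    simp only [Function.uncurry_apply_pair, schroderKernel_eq_sin_mul_rpow_mul_rpow]
    exact hbeta
  · have hpoly : IntegrableOn
        (fun x : ℝ ↦ π * (-1) ^ (n + 1) / n.factorial * ∏ k ∈ Finset.range n, (x - k)) (Ioo 0 1) :=
      (Continuous.integrableOn_Icc (by fun_prop)).mono_set Ioo_subset_Icc_self
    refine hpoly.congr_fun (fun x hx ↦ ?_) measurableSet_Ioo
    dsimp only
    rw [← integral_schroderKernel_dt hn hx]
    refine setIntegral_congr_fun measurableSet_Ioo fun t ht ↦ ?_
    exact (norm_of_nonneg (schroderKernel_nonneg n (Ioo_subset_Icc_self ht)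
      (Ioo_subset_Icc_self hx))).symm

theorem schroder_integral (n : ℕ) (hn : 1 ≤ n) :
    G n = (-1 : ℝ) ^ (n + 1) *
      ∫ u in Set.Ioi (0:ℝ), 1 / (((Real.log u) ^ 2 + π ^ 2) * (u + 1) ^ n) := by
  have hsign : (-1 : ℝ) ^ (n + 1) * (-1) ^ (n + 1) = 1 := by rw [← mul_pow]; norm_num
  calc G n
      = (-1) ^ (n + 1) * (π⁻¹ * ∫ x in Ioo (0:ℝ) 1, ∫ t in Ioo (0:ℝ) 1, schroderKernel n t x) := by
        rw [setIntegral_congr_fun measurableSet_Ioo fun x hx ↦ integral_schroderKernel_dt hn hx,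
          integral_const_mul, G, intervalIntegral.integral_of_le zero_le_one,
          integral_Ioc_eq_integral_Ioo]
        simp only [← mul_assoc]
        congr 1
        field_simp
        rw [sq, hsign]
    _ = (-1) ^ (n + 1) * (π⁻¹ * ∫ t in Ioo (0:ℝ) 1, ∫ x in Ioo (0:ℝ) 1, schroderKernel n t x) := by
        rw [integral_integral_swap (integrable_schroderKernel hn)]
    _ = _ := by
        rw [integral_Ioi_eq_integral_Ioo_div_one_sub, ← integral_const_mul]
        congr 1
        refine setIntegral_congr_fun measurableSet_Ioo fun t ht ↦ ?_
        rw [integral_schroderKernel_dx n ht, inv_mul_cancel_left₀ pi_ne_zero, smul_eq_mul]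
end

section
/- Schröder's first-order asymptotics: |G_n| ~ 1/(n log² n) as n → ∞; that is, lim_{n→∞} n (log n)² |G_n| = 1. -/
/-!
For `n ≥ 1`, `n |G n| = ∫₀¹ x Q(x) dx` with `Q(x) = ∏_{k < n-1} (1 - x/(k+1))`. On `[0, 1]` this
product is squeezed, with `L = log n`, between `(1 - x) e^{-Lx}` (Bernoulli's inequality
`(k/(k+1))^x ≤ 1 - x/(k+1)` on each factor, which telescopes) and `e^{-Lx}` (from `1 - t ≤ e^{-t}`
and `H_{n-1} ≥ log n`). Both `∫₀¹ x e^{-Lx} dx` and `∫₀¹ x (1 - x) e^{-Lx} dx` are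
`1/L² + O(1/L³)`, as their closed forms show.
-/

open MeasureTheory Filter

open Finset Real
open scoped Nat

noncomputable def gregoryProd (n : ℕ) (x : ℝ) : ℝ :=
  ∏ k ∈ range n, (1 - x / (k + 1))

lemma prod_range_succ_sub_natCast (n : ℕ) (x : ℝ) :
    ∏ k ∈ range (n + 1), (x - k) = (-1) ^ n * n ! * (x * gregoryProd n x) := by
  have hfactor : ∀ k ∈ range n,
      x - ((k + 1 : ℕ) : ℝ) = -1 * (((k + 1 : ℕ) : ℝ) * (1 - x / (k + 1))) := by
    intro k _
    push_cast
    field_simp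
    ring
  rw [prod_range_succ', prod_congr rfl hfactor, prod_mul_distrib, prod_mul_distrib, prod_const,
    card_range, ← Nat.cast_prod, prod_range_add_one_eq_factorial, gregoryProd]
  push_cast
  ring

lemma one_sub_div_natCast_add_one_nonneg {x : ℝ} (hx : x ≤ 1) (k : ℕ) : 0 ≤ 1 - x / (k + 1) := by
  rw [sub_nonneg, div_le_one (by positivity)]
  linarith [k.cast_nonneg (α := ℝ)]

lemma gregoryProd_nonneg (n : ℕ) {x : ℝ} (hx : x ≤ 1) : 0 ≤ gregoryProd n x :=
  prod_nonneg fun k _ => one_sub_div_natCast_add_one_nonneg hx k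

lemma natCast_add_one_mul_abs_G (n : ℕ) :
    ((n : ℝ) + 1) * |G (n + 1)| = ∫ x in (0:ℝ)..1, x * gregoryProd n x := by
  have hI : 0 ≤ ∫ x in (0:ℝ)..1, x * gregoryProd n x :=
    intervalIntegral.integral_nonneg zero_le_one fun x hx =>
      mul_nonneg hx.1 (gregoryProd_nonneg n hx.2)
  simp_rw [G, prod_range_succ_sub_natCast, intervalIntegral.integral_const_mul, abs_mul,
    abs_pow, abs_neg, abs_one, one_pow, one_mul, abs_inv, Nat.abs_cast, abs_of_nonneg hI,
    Nat.factorial_succ]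
  push_cast
  field_simp

lemma gregoryProd_le_exp (n : ℕ) {x : ℝ} (hx₀ : 0 ≤ x) (hx₁ : x ≤ 1) :
    gregoryProd n x ≤ exp (-(log (n + 1) * x)) :=
  calc gregoryProd n x ≤ ∏ k ∈ range n, exp (-(x / (k + 1))) :=
        prod_le_prod (fun k _ => one_sub_div_natCast_add_one_nonneg hx₁ k)
          fun k _ => one_sub_le_exp_neg _
    _ = exp (-(harmonic n * x)) := by
        rw [← exp_sum, harmonic, Rat.cast_sum, sum_mul, ← sum_neg_distrib]
        push_cast
        ring_nf
    _ ≤ exp (-(log (n + 1) * x)) := by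
        gcongr
        exact_mod_cast log_add_one_le_harmonic n

lemma one_sub_mul_exp_le_gregoryProd {n : ℕ} (hn : 1 ≤ n) {x : ℝ} (hx₀ : 0 ≤ x) (hx₁ : x ≤ 1) :
    (1 - x) * exp (-(log n * x)) ≤ gregoryProd n x := by
  induction n, hn using Nat.le_induction with
  | base => simp [gregoryProd]
  | succ n hle ih =>
    have hn' : (0 : ℝ) < n := by exact_mod_cast hle
    have hbernoulli : exp (log (n / (n + 1)) * x) ≤ 1 - x / (n + 1) := by
      rw [← rpow_def_of_pos (by positivity)]
      convert rpow_one_add_le_one_add_mul_self (s := -1 / (n + 1)) _ hx₀ hx₁ using 1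
      · field_simp; ring_nf
      · ring
      · rw [neg_div, neg_le_neg_iff, div_le_one (by positivity)]; linarith
    calc (1 - x) * exp (-(log ↑(n + 1) * x))
        = (1 - x) * exp (-(log n * x)) * exp (log (n / (n + 1)) * x) := by
          rw [mul_assoc, ← exp_add, log_div hn'.ne' (by positivity)]
          push_cast
          ring_nf
      _ ≤ gregoryProd n x * (1 - x / (n + 1)) := by
          gcongr
          exact gregoryProd_nonneg n hx₁
      _ = gregoryProd (n + 1) x := (prod_range_succ _ n).symm

@[fun_prop]
lemma continuous_gregoryProd (n : ℕ) : Continuous (gregoryProd n) :=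
  continuous_finsetProd _ fun _ _ => by fun_prop

lemma integral_mul_exp_neg_mul {L : ℝ} (hL : L ≠ 0) (b : ℝ) :
    ∫ x in (0:ℝ)..b, x * exp (-(L * x)) = (1 - (1 + L * b) * exp (-(L * b))) / L ^ 2 := by
  have hderiv : ∀ x, HasDerivAt (fun y => -(1 + L * y) * exp (-(L * y)) / L ^ 2)
      (x * exp (-(L * x))) x := by
    intro x
    have hlin := (hasDerivAt_id' x).const_mul L
    refine (((hlin.const_add 1).neg.mul hlin.neg.exp).div_const (L ^ 2)).congr_deriv ?_
    simp only [Pi.neg_apply]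
    field_simp
    ring
  rw [intervalIntegral.integral_eq_sub_of_hasDerivAt (fun x _ => hderiv x)
    ((by fun_prop : Continuous fun x => x * exp (-(L * x))).intervalIntegrable _ _)]
  simp
  ring

lemma integral_sq_mul_exp_neg_mul {L : ℝ} (hL : L ≠ 0) (b : ℝ) :
    ∫ x in (0:ℝ)..b, x ^ 2 * exp (-(L * x))
      = (2 - ((L * b + 1) ^ 2 + 1) * exp (-(L * b))) / L ^ 3 := by
  have hderiv : ∀ x, HasDerivAt (fun y => -((L * y + 1) ^ 2 + 1) * exp (-(L * y)) / L ^ 3)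
      (x ^ 2 * exp (-(L * x))) x := by
    intro x
    have hlin := (hasDerivAt_id' x).const_mul L
    refine (((((hlin.add_const 1).pow 2).add_const 1).neg.mul hlin.neg.exp).div_const
      (L ^ 3)).congr_deriv ?_
    simp only [Pi.neg_apply, Pi.pow_apply]
    field_simp
    ring
  rw [intervalIntegral.integral_eq_sub_of_hasDerivAt (fun x _ => hderiv x)
    ((by fun_prop : Continuous fun x => x ^ 2 * exp (-(L * x))).intervalIntegrable _ _)]
  simp
  ring

lemma natCast_mul_log_sq_mul_abs_G_le_one (n : ℕ) : (n : ℝ) * log n ^ 2 * |G n| ≤ 1 := by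
  rcases n with _ | m
  · simp
  rcases m.eq_zero_or_pos with rfl | hm
  · simp
  push_cast
  have hL : 0 < log ((m : ℝ) + 1) := log_pos (by simpa using hm)
  set L := log ((m : ℝ) + 1)
  have hintegral : ((m : ℝ) + 1) * |G (m + 1)| ≤ (1 - (1 + L) * exp (-L)) / L ^ 2 := by
    rw [natCast_add_one_mul_abs_G]
    calc ∫ x in (0:ℝ)..1, x * gregoryProd m x ≤ ∫ x in (0:ℝ)..1, x * exp (-(L * x)) :=
          intervalIntegral.integral_mono_on zero_le_one
            ((by fun_prop : Continuous fun x => x * gregoryProd m x).intervalIntegrable _ _)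
            ((by fun_prop : Continuous fun x => x * exp (-(L * x))).intervalIntegrable _ _)
            fun x hx => mul_le_mul_of_nonneg_left (gregoryProd_le_exp m hx.1 hx.2) hx.1
      _ = (1 - (1 + L) * exp (-L)) / L ^ 2 := by rw [integral_mul_exp_neg_mul hL.ne', mul_one]
  calc ((m : ℝ) + 1) * L ^ 2 * |G (m + 1)| = L ^ 2 * (((m : ℝ) + 1) * |G (m + 1)|) := by ring
    _ ≤ L ^ 2 * ((1 - (1 + L) * exp (-L)) / L ^ 2) := by gcongr
    _ ≤ 1 := by
      rw [mul_div_cancel₀ _ (by positivity)]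
      linarith [mul_nonneg (by linarith : 0 ≤ 1 + L) (exp_nonneg (-L))]

lemma one_sub_sub_le_natCast_mul_log_sq_mul_abs_G {n : ℕ} (hn : 2 ≤ n) :
    1 - (1 + log n) * exp (-log n) - 2 / log n ≤ (n : ℝ) * log n ^ 2 * |G n| := by
  obtain ⟨m, rfl⟩ := Nat.exists_eq_add_of_le' (by omega : 1 ≤ n)
  have hm : (1 : ℝ) ≤ m := by exact_mod_cast (by omega : 1 ≤ m)
  push_cast
  have hL : 0 < log ((m : ℝ) + 1) := log_pos (by linarith)
  have hlog_le : log m ≤ log ((m : ℝ) + 1) := log_le_log (by linarith) (by linarith)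
  set L := log ((m : ℝ) + 1)
  have hintegrand : ∀ x ∈ Set.Icc (0 : ℝ) 1,
      x * exp (-(L * x)) - x ^ 2 * exp (-(L * x)) ≤ x * gregoryProd m x := by
    intro x ⟨hx₀, hx₁⟩
    calc x * exp (-(L * x)) - x ^ 2 * exp (-(L * x)) = x * ((1 - x) * exp (-(L * x))) := by ring
      _ ≤ x * ((1 - x) * exp (-(log m * x))) := by gcongr
      _ ≤ x * gregoryProd m x := by
        gcongr
        exact one_sub_mul_exp_le_gregoryProd (by omega) hx₀ hx₁
  have hintegral :
      (1 - (1 + L) * exp (-L)) / L ^ 2 - 2 / L ^ 3 ≤ ((m : ℝ) + 1) * |G (m + 1)| := by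
    have hint₁ := (by fun_prop : Continuous fun x => x * exp (-(L * x))).intervalIntegrable
      (μ := volume) 0 1
    have hint₂ := (by fun_prop : Continuous fun x => x ^ 2 * exp (-(L * x))).intervalIntegrable
      (μ := volume) 0 1
    rw [natCast_add_one_mul_abs_G]
    calc (1 - (1 + L) * exp (-L)) / L ^ 2 - 2 / L ^ 3
        ≤ (1 - (1 + L) * exp (-L)) / L ^ 2 - (2 - ((L + 1) ^ 2 + 1) * exp (-L)) / L ^ 3 := by
          gcongr
          linarith [(by positivity : 0 ≤ ((L + 1) ^ 2 + 1) * exp (-L))]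
      _ = ∫ x in (0:ℝ)..1, x * exp (-(L * x)) - x ^ 2 * exp (-(L * x)) := by
          rw [intervalIntegral.integral_sub hint₁ hint₂, integral_mul_exp_neg_mul hL.ne',
            integral_sq_mul_exp_neg_mul hL.ne', mul_one]
      _ ≤ ∫ x in (0:ℝ)..1, x * gregoryProd m x :=
          intervalIntegral.integral_mono_on zero_le_one (hint₁.sub hint₂)
            ((by fun_prop : Continuous fun x => x * gregoryProd m x).intervalIntegrable _ _)
            hintegrand
  calc 1 - (1 + L) * exp (-L) - 2 / L
        = L ^ 2 * ((1 - (1 + L) * exp (-L)) / L ^ 2 - 2 / L ^ 3) := by field_simp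
    _ ≤ L ^ 2 * (((m : ℝ) + 1) * |G (m + 1)|) := by gcongr
    _ = ((m : ℝ) + 1) * L ^ 2 * |G (m + 1)| := by ring

lemma tendsto_one_sub_one_add_mul_exp_neg_sub_two_div :
    Tendsto (fun L => 1 - (1 + L) * exp (-L) - 2 / L) atTop (nhds 1) := by
  have hdecay : Tendsto (fun L => (1 + L) * exp (-L)) atTop (nhds 0) := by
    simpa [add_mul] using
      tendsto_exp_neg_atTop_nhds_zero.add (tendsto_pow_mul_exp_neg_atTop_nhds_zero 1)
  simpa using (tendsto_const_nhds.sub hdecay).sub (tendsto_const_nhds.div_atTop tendsto_id)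

theorem gregory_first_order_asymptotics :
    Tendsto (fun n : ℕ => (n : ℝ) * (Real.log n) ^ 2 * |G n|) atTop (nhds 1) := by
  have hlog : Tendsto (fun n : ℕ => Real.log n) atTop atTop :=
    tendsto_log_atTop.comp tendsto_natCast_atTop_atTop
  refine tendsto_of_tendsto_of_tendsto_of_le_of_le'
    (tendsto_one_sub_one_add_mul_exp_neg_sub_two_div.comp hlog) tendsto_const_nhds ?_
    (Eventually.of_forall natCast_mul_log_sq_mul_abs_G_le_one)
  filter_upwards [eventually_ge_atTop 2] with n hn
    using one_sub_sub_le_natCast_mul_log_sq_mul_abs_G hn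
end

section
/- Relation to Cauchy numbers of the second kind: for every n ≥ 1, n·C_{2,n-1} − C_{2,n} = n! |G_n|, where C_{2,n} = ∫_0^1 x(x+1)(x+2)⋯(x+n-1) dx (with C_{2,0} = 1). -/
open MeasureTheory

noncomputable def C2 (n : ℕ) : ℝ :=
  ∫ x in (0:ℝ)..1, ∏ k ∈ Finset.range n, (x + k)

/-! Both sides equal `∫₀¹ (1 - x) x(x+1)⋯(x+n-2) dx`: on the left because
`n x(x+1)⋯(x+n-2) - x(x+1)⋯(x+n-1) = (1 - x) x(x+1)⋯(x+n-2)`, on the right because the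
substitution `x ↦ 1 - x` turns `x(x-1)⋯(x-n+1)` into `(-1)^(n-1) (1 - x) x(x+1)⋯(x+n-2)`,
whose integrand has a constant sign on `[0, 1]`. -/

open Finset

lemma continuous_prod_range_add_natCast (m : ℕ) :
    Continuous fun x : ℝ => ∏ j ∈ range m, (x + j) := by
  fun_prop

lemma prod_range_succ_one_sub_sub_natCast {R : Type*} [CommRing R] (m : ℕ) (x : R) :
    ∏ k ∈ range (m + 1), ((1 - x) - k) = (-1) ^ m * ((1 - x) * ∏ j ∈ range m, (x + j)) := by
  have hshift : ∀ j ∈ range m, (1 - x) - ((j + 1 : ℕ) : R) = -1 * (x + j) := by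
    intro j _; push_cast; ring
  rw [prod_range_succ', prod_congr rfl hshift, prod_mul_distrib, prod_const, card_range]
  push_cast
  ring

lemma integral_prod_range_succ_sub_natCast (m : ℕ) :
    ∫ x in (0:ℝ)..1, ∏ k ∈ range (m + 1), (x - k) =
      (-1) ^ m * ∫ x in (0:ℝ)..1, (1 - x) * ∏ j ∈ range m, (x + j) := by
  have hreflect := intervalIntegral.integral_comp_sub_left
    (fun y : ℝ => ∏ k ∈ range (m + 1), (y - k)) (a := 0) (b := 1) 1
  norm_num at hreflect
  simp only [← hreflect, prod_range_succ_one_sub_sub_natCast, intervalIntegral.integral_const_mul]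

lemma succ_mul_C2_sub_C2_succ (m : ℕ) :
    (m + 1 : ℝ) * C2 m - C2 (m + 1) =
      ∫ x in (0:ℝ)..1, (1 - x) * ∏ j ∈ range m, (x + j) := by
  rw [C2, C2, ← intervalIntegral.integral_const_mul, ← intervalIntegral.integral_sub
    (((continuous_prod_range_add_natCast m).const_mul _).intervalIntegrable _ _)
    ((continuous_prod_range_add_natCast (m + 1)).intervalIntegrable _ _)]
  congr 1 with x
  rw [prod_range_succ]
  ring

lemma integral_one_sub_mul_prod_range_add_natCast_nonneg (m : ℕ) :
    0 ≤ ∫ x in (0:ℝ)..1, (1 - x) * ∏ j ∈ range m, (x + j) := by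
  refine intervalIntegral.integral_nonneg zero_le_one fun x ⟨hx0, hx1⟩ => ?_
  exact mul_nonneg (by linarith) (prod_nonneg fun j _ => by positivity)

theorem cauchy_second_kind_relation (n : ℕ) (hn : 1 ≤ n) :
    (n : ℝ) * C2 (n - 1) - C2 n = (n.factorial : ℝ) * |G n| := by
  obtain ⟨m, rfl⟩ := Nat.exists_eq_add_of_le' hn
  have hfac : (0 : ℝ) < (m + 1).factorial := by positivity
  rw [G, integral_prod_range_succ_sub_natCast, abs_mul, abs_mul, abs_pow, abs_neg, abs_one,
    one_pow, one_mul, abs_of_pos (inv_pos.2 hfac),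
    abs_of_nonneg (integral_one_sub_mul_prod_range_add_natCast_nonneg m),
    mul_inv_cancel_left₀ hfac.ne', Nat.add_sub_cancel, Nat.cast_succ, succ_mul_C2_sub_C2_succ]
end
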